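/- arXiv:1806.03408 — 5 statements merged into one kernel-verified Lean document; each statement's English description precedes it below -/
import Mathlib

section
/- Any element C of 𝔖_k fixed by the Sym(k)-action (σ·C)^{(ℓ)}_{i,j} = c^{(σ⁻¹ℓ)}_{σ⁻¹i, σ⁻¹j} for all σ is determined by real numbers x, y, a, b with x + (k−1)a = 1 and y + a + (k−2)b = 0, via c^{(ℓ)}_{i,j} = x if i = j = ℓ; y if i = j ≠ ℓ; a if exactly one of i, j equals ℓ; b if i ≠ j and neither equals ℓ. Conversely every such C is a fixed point. Hence the invariant space 𝔖_k^{fix} is a 2-dimensional affine subspace. -/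
open Finset Filter

/-- Membership in the affine set 𝔖ₖ. -/
def inSk (k : ℕ) (C : Fin k → Matrix (Fin k) (Fin k) ℝ) : Prop :=
  ∀ ℓ : Fin k,
    (∀ i : Fin k, i ≠ ℓ → ∑ j, C ℓ i j = 0) ∧
    (∀ j : Fin k, j ≠ ℓ → ∑ i, C ℓ i j = 0) ∧
    (∑ i, ∑ j, C ℓ i j = 1)

/-- A k-sample: nonempty subset of [k]×[k] with pairwise distinct second coordinates. -/
def IsSample {k : ℕ} (s : Finset (Fin k × Fin k)) : Prop :=
  s.Nonempty ∧ ∀ p ∈ s, ∀ q ∈ s, p ≠ q → p.2 ≠ q.2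

/-- g_s^{(ℓ)}(C) -/
def gPart {k : ℕ} (s : Finset (Fin k × Fin k)) (C : Fin k → Matrix (Fin k) (Fin k) ℝ)
    (ℓ : Fin k) : ℝ :=
  ∑ p ∈ s, C ℓ p.1 p.2

/-- g_s(C) -/
def gSample {k : ℕ} (s : Finset (Fin k × Fin k)) (C : Fin k → Matrix (Fin k) (Fin k) ℝ) : ℝ :=
  ∑ ℓ : Fin k, |gPart s C ℓ|

/-- g_{S_k}(C) : the maximum of g_s(C) over all k-samples s. -/
noncomputable def gMax (k : ℕ) (C : Fin k → Matrix (Fin k) (Fin k) ℝ) : ℝ :=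
  ⨆ s : {s : Finset (Fin k × Fin k) // IsSample s}, gSample s.1 C

/-- multiplicity of ℓ in the multiset of coordinates of elements of s -/
def mult {k : ℕ} (s : Finset (Fin k × Fin k)) (ℓ : Fin k) : ℕ :=
  (s.filter (fun p => p.1 = ℓ)).card + (s.filter (fun p => p.2 = ℓ)).card

/-- β(s): number of distinct indices among coordinates of s -/
def beta {k : ℕ} (s : Finset (Fin k × Fin k)) : ℕ :=
  (s.image Prod.fst ∪ s.image Prod.snd).card

/-- γ(s): number of diagonal elements of s -/
def gamma {k : ℕ} (s : Finset (Fin k × Fin k)) : ℕ :=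
  (s.filter (fun p => p.1 = p.2)).card

/-- the strong homogeneous flow C*_k -/
noncomputable def Cstar (k : ℕ) : Fin k → Matrix (Fin k) (Fin k) ℝ :=
  fun ℓ i j =>
    if i = ℓ ∧ j = ℓ then 2/(k:ℝ) - 1/(k:ℝ)^2
    else if i = ℓ ∨ j = ℓ then 1/(k:ℝ) - 1/(k:ℝ)^2
    else -1/(k:ℝ)^2

/-- the Sym(k)-invariant tuple with parameters x (i=j=ℓ), y (i=j≠ℓ),
a (exactly one of i,j equals ℓ), b (otherwise) -/
def Cfix (k : ℕ) (x y a b : ℝ) : Fin k → Matrix (Fin k) (Fin k) ℝ :=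
  fun ℓ i j =>
    if i = ℓ ∧ j = ℓ then x
    else if i = j then y
    else if i = ℓ ∨ j = ℓ then a
    else b

/-- The Sym(k)-action on tuples of matrices. -/
def permAct {k : ℕ} (σ : Equiv.Perm (Fin k)) (C : Fin k → Matrix (Fin k) (Fin k) ℝ) :
    Fin k → Matrix (Fin k) (Fin k) ℝ :=
  fun ℓ i j => C (σ⁻¹ ℓ) (σ⁻¹ i) (σ⁻¹ j)

/-- optimal value O_k -/
noncomputable def Ovalue (k : ℕ) : ℝ := sInf {y | ∃ C, inSk k C ∧ gMax k C = y}

/-! A fixed tuple is constant on the orbits of `Sym(k)` on triples `(ℓ, i, j)`. Any injective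
partial map of `Fin k` extends to a permutation, so these orbits are the five equality patterns
of `(ℓ, i, j)`, and a fixed `C` is described by five numbers. Row `j ≠ ℓ` and column `j` of
`C ℓ` have the same entries except `C ℓ j ℓ` versus `C ℓ ℓ j`, so the vanishing of both sums
identifies these two, leaving the four parameters of `Cfix`; the linear conditions defining
`𝔖_k` then reduce to the two constraints. Their solutions are a translate of the image of an
injective linear map `ℝ² → (Fin k → Matrix _ _ ℝ)`. -/

theorem Set.InjOn.exists_perm_eqOn {α : Type*} [Fintype α] {s : Set α} {f : α → α}
    (hf : Set.InjOn f s) : ∃ σ : Equiv.Perm α, Set.EqOn σ f s := by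
  obtain ⟨g, hg⟩ := Set.MapsTo.exists_equiv_extend_of_card_eq (t := Finset.univ)
    (Finset.card_univ).symm (fun _ _ => Finset.mem_coe.2 (Finset.mem_univ _)) hf
  exact ⟨g.trans (Equiv.subtypeUnivEquiv Finset.mem_univ), hg⟩

section Sums

variable {ι : Type*} [Fintype ι] [DecidableEq ι]

theorem sum_ite_eq_add_card_sub_one_mul (ℓ : ι) (u v : ℝ) :
    ∑ j, (if j = ℓ then u else v) = u + ((Fintype.card ι : ℝ) - 1) * v := by
  rw [Finset.sum_ite, Finset.filter_eq', Finset.filter_ne']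
  simp [Finset.card_erase_of_mem, Nat.cast_sub (Fintype.card_pos_iff.2 ⟨ℓ⟩)]

theorem sum_ite_ite_eq_add_add_card_sub_two_mul {ℓ i : ι} (h : i ≠ ℓ) (u w v : ℝ) :
    ∑ j, (if j = ℓ then u else if j = i then w else v) =
      u + w + ((Fintype.card ι : ℝ) - 2) * v := by
  have hsplit : ∀ j, (if j = ℓ then u else if j = i then w else v) =
      (if j = ℓ then u else v) + (if j = i then w - v else 0) := by
    intro j
    split_ifs with hℓ hi <;> first | exact absurd (hi.symm.trans hℓ) h | ring
  rw [Finset.sum_congr rfl fun j _ => hsplit j, Finset.sum_add_distrib,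
    sum_ite_eq_add_card_sub_one_mul, Finset.sum_ite_eq']
  simp only [Finset.mem_univ, if_true]
  ring

end Sums

section Cfix

variable {k : ℕ} (x y a b : ℝ)

theorem Cfix_apply_comm (ℓ i j : Fin k) : Cfix k x y a b ℓ i j = Cfix k x y a b ℓ j i := by
  simp only [Cfix]
  split_ifs <;> grind

theorem permAct_Cfix (σ : Equiv.Perm (Fin k)) : permAct σ (Cfix k x y a b) = Cfix k x y a b := by
  funext ℓ i j
  simp only [permAct, Cfix, EmbeddingLike.apply_eq_iff_eq]

theorem sum_Cfix_row_self (ℓ : Fin k) : ∑ j, Cfix k x y a b ℓ ℓ j = x + ((k : ℝ) - 1) * a := by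
  have hrow : ∀ j, Cfix k x y a b ℓ ℓ j = if j = ℓ then x else a := by
    intro j
    simp only [Cfix]
    split_ifs <;> grind
  simp only [hrow, sum_ite_eq_add_card_sub_one_mul, Fintype.card_fin]

theorem sum_Cfix_row_of_ne {ℓ i : Fin k} (h : i ≠ ℓ) :
    ∑ j, Cfix k x y a b ℓ i j = y + a + ((k : ℝ) - 2) * b := by
  have hrow : ∀ j, Cfix k x y a b ℓ i j = if j = ℓ then a else if j = i then y else b := by
    intro j
    simp only [Cfix]
    split_ifs <;> grind
  simp only [hrow, sum_ite_ite_eq_add_add_card_sub_two_mul h, Fintype.card_fin]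
  ring

theorem sum_Cfix_col_of_ne {ℓ j : Fin k} (h : j ≠ ℓ) :
    ∑ i, Cfix k x y a b ℓ i j = y + a + ((k : ℝ) - 2) * b := by
  simp only [Cfix_apply_comm x y a b ℓ _ j, sum_Cfix_row_of_ne x y a b h]

theorem inSk_Cfix_iff (hk : 2 ≤ k) :
    inSk k (Cfix k x y a b) ↔ x + ((k : ℝ) - 1) * a = 1 ∧ y + a + ((k : ℝ) - 2) * b = 0 := by
  have htotal : ∀ ℓ, (∀ i, i ≠ ℓ → ∑ j, Cfix k x y a b ℓ i j = 0) →
      ∑ i, ∑ j, Cfix k x y a b ℓ i j = x + ((k : ℝ) - 1) * a := fun ℓ hrows => by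
    rw [Finset.sum_eq_single ℓ (fun i _ hi => hrows i hi) (by simp), sum_Cfix_row_self]
  constructor
  · intro hC
    obtain ⟨i, ℓ, hiℓ⟩ :=
      (Fintype.one_lt_card_iff (α := Fin k)).1 (by rw [Fintype.card_fin]; omega)
    obtain ⟨hrows, -, hsum⟩ := hC ℓ
    exact ⟨htotal ℓ hrows ▸ hsum, sum_Cfix_row_of_ne x y a b hiℓ ▸ hrows i hiℓ⟩
  · rintro ⟨hx, hy⟩ ℓ
    have hrows : ∀ i, i ≠ ℓ → ∑ j, Cfix k x y a b ℓ i j = 0 := fun i hi => by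
      rw [sum_Cfix_row_of_ne x y a b hi, hy]
    refine ⟨hrows, fun j hj => ?_, by rw [htotal ℓ hrows, hx]⟩
    rw [sum_Cfix_col_of_ne x y a b hj, hy]

end Cfix

section FixedPoints

variable {k : ℕ} {C : Fin k → Matrix (Fin k) (Fin k) ℝ}

theorem apply_apply_eq_of_permAct_eq {σ : Equiv.Perm (Fin k)} (h : permAct σ C = C)
    (ℓ i j : Fin k) : C (σ ℓ) (σ i) (σ j) = C ℓ i j := by
  simpa [permAct] using (congrFun (congrFun (congrFun h (σ ℓ)) (σ i)) (σ j)).symm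

theorem apply_eq_apply_of_fixed (hfix : ∀ σ : Equiv.Perm (Fin k), permAct σ C = C)
    {ℓ i j ℓ' i' j' : Fin k} (hi : i = ℓ ↔ i' = ℓ') (hj : j = ℓ ↔ j' = ℓ')
    (hij : i = j ↔ i' = j') : C ℓ i j = C ℓ' i' j' := by
  let f : Fin k → Fin k := fun m => if m = ℓ then ℓ' else if m = i then i' else j'
  have hf : Set.InjOn f {ℓ, i, j} := by
    intro m hm n hn
    simp only [Set.mem_insert_iff, Set.mem_singleton_iff] at hm hn
    simp only [f]
    split_ifs <;> grind
  obtain ⟨σ, hσ⟩ := hf.exists_perm_eqOn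
  obtain ⟨hℓ, hi', hj'⟩ : σ ℓ = ℓ' ∧ σ i = i' ∧ σ j = j' := by
    refine ⟨?_, ?_, ?_⟩ <;> rw [hσ (by simp)] <;> simp only [f] <;> split_ifs <;> grind
  rw [← apply_apply_eq_of_permAct_eq (hfix σ), hℓ, hi', hj']

variable (hfix : ∀ σ : Equiv.Perm (Fin k), permAct σ C = C)
include hfix

theorem apply_comm_of_fixed (hC : inSk k C) (ℓ i j : Fin k) : C ℓ i j = C ℓ j i := by
  have hcross : ∀ j, j ≠ ℓ → C ℓ ℓ j = C ℓ j ℓ := by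
    intro j hj
    have hlines : ∑ m, (C ℓ j m - C ℓ m j) = 0 := by
      rw [Finset.sum_sub_distrib, (hC ℓ).1 j hj, (hC ℓ).2.1 j hj, sub_zero]
    have hrest : ∀ m, m ≠ ℓ → C ℓ j m - C ℓ m j = 0 := fun m hm =>
      sub_eq_zero.2 (apply_eq_apply_of_fixed hfix (by grind) (by grind) (by grind))
    rw [Finset.sum_eq_single ℓ (fun m _ hm => hrest m hm) (by simp)] at hlines
    linarith
  by_cases hi : i = ℓ
  · subst hi
    by_cases hj : j = i
    · rw [hj]
    · exact hcross j hj
  by_cases hj : j = ℓ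
  · subst hj
    exact (hcross i hi).symm
  exact apply_eq_apply_of_fixed hfix (by grind) (by grind) (by grind)

theorem exists_eq_Cfix_of_fixed (hk : 3 ≤ k) (hC : inSk k C) :
    ∃ x y a b : ℝ, C = Cfix k x y a b := by
  obtain ⟨e₀, e₁, e₂, h₀₁, h₀₂, h₁₂⟩ :=
    (Fintype.two_lt_card_iff (α := Fin k)).1 (by rw [Fintype.card_fin]; omega)
  refine ⟨C e₀ e₀ e₀, C e₀ e₁ e₁, C e₀ e₀ e₁, C e₀ e₁ e₂, ?_⟩
  funext ℓ i j
  simp only [Cfix]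
  split_ifs with hℓ hij hone
  · exact apply_eq_apply_of_fixed hfix (by grind) (by grind) (by grind)
  · exact apply_eq_apply_of_fixed hfix (by grind) (by grind) (by grind)
  · rcases hone with hi | hj
    · exact apply_eq_apply_of_fixed hfix (by grind) (by grind) (by grind)
    · rw [apply_comm_of_fixed hfix hC]
      exact apply_eq_apply_of_fixed hfix (by grind) (by grind) (by grind)
  · exact apply_eq_apply_of_fixed hfix (by grind) (by grind) (by grind)

end FixedPoints

theorem fixed_iff_exists_Cfix {k : ℕ} (hk : 3 ≤ k) {C : Fin k → Matrix (Fin k) (Fin k) ℝ}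
    (hC : inSk k C) :
    (∀ σ : Equiv.Perm (Fin k), permAct σ C = C) ↔
      ∃ x y a b : ℝ, x + ((k : ℝ) - 1) * a = 1 ∧ y + a + ((k : ℝ) - 2) * b = 0 ∧
        C = Cfix k x y a b := by
  constructor
  · intro hfix
    obtain ⟨x, y, a, b, rfl⟩ := exists_eq_Cfix_of_fixed hfix hk hC
    obtain ⟨hx, hy⟩ := (inSk_Cfix_iff x y a b (by omega)).1 hC
    exact ⟨x, y, a, b, hx, hy, rfl⟩
  · rintro ⟨x, y, a, b, -, -, rfl⟩
    exact permAct_Cfix x y a b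

section Subspace

variable (k : ℕ)

/-- `x` and `y` solve the homogeneous versions of the two constraints. -/
def CfixDirection : ℝ × ℝ →ₗ[ℝ] (Fin k → Matrix (Fin k) (Fin k) ℝ) where
  toFun p := Cfix k (-(((k : ℝ) - 1) * p.1)) (-(p.1 + ((k : ℝ) - 2) * p.2)) p.1 p.2
  map_add' p q := by
    funext ℓ i j
    simp only [Pi.add_apply, Matrix.add_apply, Cfix, Prod.fst_add, Prod.snd_add]
    split_ifs <;> ring
  map_smul' r p := by
    funext ℓ i j
    simp only [Pi.smul_apply, Matrix.smul_apply, smul_eq_mul, RingHom.id_apply, Cfix,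
      Prod.smul_fst, Prod.smul_snd]
    split_ifs <;> ring

def CfixSubspace : AffineSubspace ℝ (Fin k → Matrix (Fin k) (Fin k) ℝ) :=
  AffineSubspace.mk' (Cfix k 1 0 0 0) (LinearMap.range (CfixDirection k))

theorem mem_CfixSubspace_iff (C : Fin k → Matrix (Fin k) (Fin k) ℝ) :
    C ∈ CfixSubspace k ↔
      ∃ x y a b : ℝ, x + ((k : ℝ) - 1) * a = 1 ∧ y + a + ((k : ℝ) - 2) * b = 0 ∧
        C = Cfix k x y a b := by
  have hshift : ∀ p : ℝ × ℝ, CfixDirection k p + Cfix k 1 0 0 0 =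
      Cfix k (1 - ((k : ℝ) - 1) * p.1) (-(p.1 + ((k : ℝ) - 2) * p.2)) p.1 p.2 := by
    intro p
    funext ℓ i j
    simp only [CfixDirection, LinearMap.coe_mk, AddHom.coe_mk, Pi.add_apply, Matrix.add_apply,
      Cfix]
    split_ifs <;> ring
  simp only [CfixSubspace, AffineSubspace.mem_mk', LinearMap.mem_range, vsub_eq_sub,
    eq_sub_iff_add_eq, hshift]
  constructor
  · rintro ⟨p, hp⟩
    exact ⟨_, _, p.1, p.2, by ring, by ring, hp.symm⟩
  · rintro ⟨x, y, a, b, hx, hy, rfl⟩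
    refine ⟨(a, b), ?_⟩
    congr 1 <;> linarith

theorem CfixDirection_injective (hk : 3 ≤ k) : Function.Injective (CfixDirection k) := by
  intro p q h
  obtain ⟨e₀, e₁, e₂, h₀₁, h₀₂, h₁₂⟩ :=
    (Fintype.two_lt_card_iff (α := Fin k)).1 (by rw [Fintype.card_fin]; omega)
  have ha := congrFun (congrFun (congrFun h e₀) e₀) e₁
  have hb := congrFun (congrFun (congrFun h e₀) e₁) e₂
  simp [CfixDirection, Cfix, h₀₁, h₁₂, h₀₁.symm, h₀₂.symm] at ha hb
  exact Prod.ext ha hb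

theorem finrank_direction_CfixSubspace (hk : 3 ≤ k) :
    Module.finrank ℝ (CfixSubspace k).direction = 2 := by
  rw [CfixSubspace, AffineSubspace.direction_mk',
    LinearMap.finrank_range_of_inj (CfixDirection_injective k hk), Module.finrank_prod,
    Module.finrank_self]

end Subspace

theorem stmt3 (k : ℕ) (hk : 3 ≤ k) :
    (∀ C : Fin k → Matrix (Fin k) (Fin k) ℝ, inSk k C →
      ((∀ σ : Equiv.Perm (Fin k), permAct σ C = C) ↔
        ∃ x y a b : ℝ, x + ((k:ℝ) - 1) * a = 1 ∧ y + a + ((k:ℝ) - 2) * b = 0 ∧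
          C = Cfix k x y a b)) ∧
    ∃ A : AffineSubspace ℝ (Fin k → Matrix (Fin k) (Fin k) ℝ),
      (A : Set (Fin k → Matrix (Fin k) (Fin k) ℝ)) =
        {C | inSk k C ∧ ∀ σ : Equiv.Perm (Fin k), permAct σ C = C} ∧
      Module.finrank ℝ A.direction = 2 := by
  refine ⟨fun C hC => fixed_iff_exists_Cfix hk hC, CfixSubspace k, ?_,
    finrank_direction_CfixSubspace k hk⟩
  ext C
  rw [SetLike.mem_coe, mem_CfixSubspace_iff]
  constructor
  · rintro ⟨x, y, a, b, hx, hy, rfl⟩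
    exact ⟨(inSk_Cfix_iff x y a b (by omega)).2 ⟨hx, hy⟩, permAct_Cfix x y a b⟩
  · rintro ⟨hC, hfix⟩
    exact (fixed_iff_exists_Cfix hk hC).1 hfix
end

section
/- The optimization problem of minimizing g_{S_k} over 𝔖_k attains its minimum at some point of the invariant space 𝔖_k^{fix}; i.e., there exists a Sym(k)-fixed point C with g_{S_k}(C) = inf_{C' ∈ 𝔖_k} g_{S_k}(C'). -/
open Finset Filter

/-
A minimiser of `gMax` on `𝔖ₖ` exists because `gMax` is lower semicontinuous (a supremum of
continuous functions) and bounds every entry `|C ℓ i j|` (singleton samples), so its sublevel sets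
in the closed set `𝔖ₖ` are compact. Averaging a minimiser over `Sym(k)` gives a fixed point, which
stays in the affine set `𝔖ₖ`; since `gMax` is convex and `Sym(k)`-invariant, Jensen's inequality
shows that averaging does not increase it.
-/

open Equiv

variable {k : ℕ}

theorem gMax_nonneg (C : Fin k → Matrix (Fin k) (Fin k) ℝ) : 0 ≤ gMax k C :=
  Real.iSup_nonneg fun _ => Finset.sum_nonneg fun _ _ => abs_nonneg _

theorem gSample_le_gMax {s : Finset (Fin k × Fin k)} (hs : IsSample s)
    (C : Fin k → Matrix (Fin k) (Fin k) ℝ) : gSample s C ≤ gMax k C :=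
  le_ciSup (f := fun s : {s // IsSample s} => gSample s.1 C) (Set.finite_range _).bddAbove
    ⟨s, hs⟩

-- `0 ≤ r` is needed: for `k = 0` there are no samples, and the empty `⨆` is `0` in `ℝ`.
theorem gMax_le {C : Fin k → Matrix (Fin k) (Fin k) ℝ} {r : ℝ} (hr : 0 ≤ r)
    (h : ∀ s, IsSample s → gSample s C ≤ r) : gMax k C ≤ r :=
  Real.iSup_le (fun s => h s.1 s.2) hr

theorem isSample_singleton (p : Fin k × Fin k) : IsSample {p} :=
  ⟨Finset.singleton_nonempty p, by simp⟩

theorem abs_apply_le_gMax (C : Fin k → Matrix (Fin k) (Fin k) ℝ) (ℓ i j : Fin k) :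
    |C ℓ i j| ≤ gMax k C :=
  calc |C ℓ i j| = |gPart {(i, j)} C ℓ| := by simp [gPart]
    _ ≤ gSample {(i, j)} C :=
        Finset.single_le_sum (f := fun ℓ => |gPart {(i, j)} C ℓ|) (fun _ _ => abs_nonneg _)
          (Finset.mem_univ ℓ)
    _ ≤ gMax k C := gSample_le_gMax (isSample_singleton (i, j)) C

theorem permAct_mul (σ τ : Perm (Fin k)) (C : Fin k → Matrix (Fin k) (Fin k) ℝ) :
    permAct (σ * τ) C = permAct σ (permAct τ C) := rfl

theorem permAct_inv_permAct (σ : Perm (Fin k)) (C : Fin k → Matrix (Fin k) (Fin k) ℝ) :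
    permAct σ⁻¹ (permAct σ C) = C := by
  rw [← permAct_mul, inv_mul_cancel]
  rfl

theorem sum_permAct_row (σ : Perm (Fin k)) (C : Fin k → Matrix (Fin k) (Fin k) ℝ)
    (ℓ i : Fin k) :
    ∑ j, permAct σ C ℓ i j = ∑ j, C (σ⁻¹ ℓ) (σ⁻¹ i) j :=
  Equiv.sum_comp σ⁻¹ _

theorem sum_permAct_col (σ : Perm (Fin k)) (C : Fin k → Matrix (Fin k) (Fin k) ℝ)
    (ℓ j : Fin k) :
    ∑ i, permAct σ C ℓ i j = ∑ i, C (σ⁻¹ ℓ) i (σ⁻¹ j) :=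
  Equiv.sum_comp σ⁻¹ fun i => C (σ⁻¹ ℓ) i (σ⁻¹ j)

theorem inSk_permAct {C : Fin k → Matrix (Fin k) (Fin k) ℝ} (hC : inSk k C)
    (σ : Perm (Fin k)) : inSk k (permAct σ C) := by
  intro ℓ
  obtain ⟨hrow, hcol, htot⟩ := hC (σ⁻¹ ℓ)
  refine ⟨fun i hi => ?_, fun j hj => ?_, ?_⟩
  · rw [sum_permAct_row]
    exact hrow _ (σ⁻¹.injective.ne hi)
  · rw [sum_permAct_col]
    exact hcol _ (σ⁻¹.injective.ne hj)
  · simp only [sum_permAct_row]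
    exact (Equiv.sum_comp σ⁻¹ _).trans htot

theorem IsSample.map_prodCongr {s : Finset (Fin k × Fin k)} (hs : IsSample s)
    (σ : Perm (Fin k)) :
    IsSample (s.map (σ.prodCongr σ).toEmbedding) := by
  refine ⟨hs.1.map, ?_⟩
  simp only [Finset.mem_map, Equiv.coe_toEmbedding]
  rintro _ ⟨p, hp, rfl⟩ _ ⟨q, hq, rfl⟩ hne h2
  exact hs.2 p hp q hq (ne_of_apply_ne _ hne) (σ.injective h2)

theorem gSample_map_permAct (σ : Perm (Fin k)) (s : Finset (Fin k × Fin k))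
    (C : Fin k → Matrix (Fin k) (Fin k) ℝ) :
    gSample (s.map (σ.prodCongr σ).toEmbedding) (permAct σ C) = gSample s C := by
  have hpart : ∀ ℓ,
      gPart (s.map (σ.prodCongr σ).toEmbedding) (permAct σ C) (σ ℓ) = gPart s C ℓ := by
    intro ℓ
    simp [gPart, permAct]
  rw [gSample, ← Equiv.sum_comp σ]
  simp only [hpart, gSample]

theorem gMax_le_gMax_permAct (σ : Perm (Fin k)) (C : Fin k → Matrix (Fin k) (Fin k) ℝ) :
    gMax k C ≤ gMax k (permAct σ C) :=
  gMax_le (gMax_nonneg _) fun s hs =>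
    gSample_map_permAct σ s C ▸ gSample_le_gMax (hs.map_prodCongr σ) _

theorem gMax_permAct (σ : Perm (Fin k)) (C : Fin k → Matrix (Fin k) (Fin k) ℝ) :
    gMax k (permAct σ C) = gMax k C := by
  refine le_antisymm ?_ (gMax_le_gMax_permAct σ C)
  simpa only [permAct_inv_permAct] using gMax_le_gMax_permAct σ⁻¹ (permAct σ C)

theorem convex_setOf_inSk : Convex ℝ {C : Fin k → Matrix (Fin k) (Fin k) ℝ | inSk k C} := by
  intro C hC D hD a b _ _ hab ℓ
  obtain ⟨hCr, hCc, hCt⟩ := hC ℓ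
  obtain ⟨hDr, hDc, hDt⟩ := hD ℓ
  simp only [Pi.add_apply, Pi.smul_apply, Matrix.add_apply, Matrix.smul_apply, smul_eq_mul,
    Finset.sum_add_distrib, ← Finset.mul_sum]
  exact ⟨fun i hi => by simp [hCr i hi, hDr i hi], fun j hj => by simp [hCc j hj, hDc j hj],
    by simp [hCt, hDt, hab]⟩

theorem convexOn_gSample (s : Finset (Fin k × Fin k)) : ConvexOn ℝ Set.univ (gSample s) := by
  refine ⟨convex_univ, fun C _ D _ a b ha hb _ => ?_⟩
  have hpart : ∀ ℓ, gPart s (a • C + b • D) ℓ = a * gPart s C ℓ + b * gPart s D ℓ := by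
    intro ℓ
    simp [gPart, Finset.sum_add_distrib, Finset.mul_sum]
  simp only [gSample, hpart, smul_eq_mul, Finset.mul_sum, ← Finset.sum_add_distrib]
  refine Finset.sum_le_sum fun ℓ _ => (abs_add_le _ _).trans_eq ?_
  rw [abs_mul, abs_mul, abs_of_nonneg ha, abs_of_nonneg hb]

theorem convexOn_gMax : ConvexOn ℝ Set.univ (gMax k) := by
  refine ⟨convex_univ, fun C _ D _ a b ha hb hab => ?_⟩
  refine gMax_le (by positivity [gMax_nonneg C, gMax_nonneg D]) fun s hs =>
    ((convexOn_gSample s).2 trivial trivial ha hb hab).trans ?_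
  gcongr <;> exact gSample_le_gMax hs _

noncomputable def symAverage (C : Fin k → Matrix (Fin k) (Fin k) ℝ) :
    Fin k → Matrix (Fin k) (Fin k) ℝ :=
  ∑ σ : Perm (Fin k), (Fintype.card (Perm (Fin k)) : ℝ)⁻¹ • permAct σ C

theorem sum_inv_card_perm : ∑ _σ : Perm (Fin k), (Fintype.card (Perm (Fin k)) : ℝ)⁻¹ = 1 := by
  simp

theorem permAct_symAverage (τ : Perm (Fin k)) (C : Fin k → Matrix (Fin k) (Fin k) ℝ) :
    permAct τ (symAverage C) = symAverage C := by
  have hlin : permAct τ (symAverage C) =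
      ∑ σ : Perm (Fin k), (Fintype.card (Perm (Fin k)) : ℝ)⁻¹ • permAct (τ * σ) C := by
    ext ℓ i j
    simp [symAverage, permAct, Finset.sum_apply, Matrix.sum_apply]
  rw [hlin, symAverage]
  exact Equiv.sum_comp (Equiv.mulLeft τ) fun σ =>
    (Fintype.card (Perm (Fin k)) : ℝ)⁻¹ • permAct σ C

theorem inSk_symAverage {C : Fin k → Matrix (Fin k) (Fin k) ℝ} (hC : inSk k C) :
    inSk k (symAverage C) :=
  convex_setOf_inSk.sum_mem (fun _ _ => by positivity) sum_inv_card_perm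
    fun σ _ => inSk_permAct hC σ

theorem gMax_symAverage_le (C : Fin k → Matrix (Fin k) (Fin k) ℝ) :
    gMax k (symAverage C) ≤ gMax k C :=
  calc gMax k (symAverage C)
      ≤ ∑ σ : Perm (Fin k), (Fintype.card (Perm (Fin k)) : ℝ)⁻¹ • gMax k (permAct σ C) :=
        convexOn_gMax.map_sum_le (fun _ _ => by positivity) sum_inv_card_perm fun _ _ => trivial
    _ = gMax k C := by
        simp only [gMax_permAct, ← Finset.sum_smul, sum_inv_card_perm, one_smul]

theorem continuous_gSample (s : Finset (Fin k × Fin k)) : Continuous (gSample s) := by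
  unfold gSample gPart
  fun_prop

theorem lowerSemicontinuous_gMax : LowerSemicontinuous (gMax k) :=
  lowerSemicontinuous_ciSup (fun _ => (Set.finite_range _).bddAbove) fun s =>
    (continuous_gSample s.1).lowerSemicontinuous

theorem isClosed_setOf_inSk : IsClosed {C : Fin k → Matrix (Fin k) (Fin k) ℝ | inSk k C} := by
  simp only [inSk, Set.ofPred_forall, Set.ofPred_and]
  refine isClosed_iInter fun ℓ => ((isClosed_iInter fun i => isClosed_iInter fun _ => ?_).inter
    ((isClosed_iInter fun j => isClosed_iInter fun _ => ?_).inter ?_)) <;>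
  exact isClosed_eq (by fun_prop) continuous_const

theorem isCompact_setOf_inSk_gMax_le (M : ℝ) :
    IsCompact {C : Fin k → Matrix (Fin k) (Fin k) ℝ | inSk k C ∧ gMax k C ≤ M} :=
  (isCompact_univ_pi fun _ => isCompact_univ_pi fun _ => isCompact_univ_pi fun _ =>
    isCompact_Icc).of_isClosed_subset
    (isClosed_setOf_inSk.inter (lowerSemicontinuous_gMax.isClosed_preimage M))
    fun C hC ℓ _ i _ j _ => abs_le.1 ((abs_apply_le_gMax C ℓ i j).trans hC.2)

theorem inSk_single : inSk k fun ℓ => Matrix.single ℓ ℓ (1 : ℝ) := by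
  intro ℓ
  simp [Matrix.single_apply, eq_comm (a := ℓ), ite_and]

theorem exists_inSk_forall_gMax_le :
    ∃ C : Fin k → Matrix (Fin k) (Fin k) ℝ, inSk k C ∧
      ∀ C' : Fin k → Matrix (Fin k) (Fin k) ℝ, inSk k C' → gMax k C ≤ gMax k C' := by
  let C₀ : Fin k → Matrix (Fin k) (Fin k) ℝ := fun ℓ => Matrix.single ℓ ℓ 1
  have hC₀ : C₀ ∈ {C | inSk k C ∧ gMax k C ≤ gMax k C₀} := ⟨inSk_single, le_rfl⟩
  obtain ⟨C, hC, hmin⟩ := (lowerSemicontinuous_gMax.lowerSemicontinuousOn _).exists_isMinOn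
    ⟨C₀, hC₀⟩ (isCompact_setOf_inSk_gMax_le _)
  refine ⟨C, hC.1, fun C' hC' => ?_⟩
  rcases le_total (gMax k C') (gMax k C₀) with h | h
  · exact isMinOn_iff.1 hmin C' ⟨hC', h⟩
  · exact hC.2.trans h

theorem stmt4_general (k : ℕ) :
    ∃ C : Fin k → Matrix (Fin k) (Fin k) ℝ, inSk k C ∧
      (∀ σ : Equiv.Perm (Fin k), permAct σ C = C) ∧
      ∀ C' : Fin k → Matrix (Fin k) (Fin k) ℝ, inSk k C' → gMax k C ≤ gMax k C' := by
  obtain ⟨C, hC, hmin⟩ := exists_inSk_forall_gMax_le (k := k)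
  exact ⟨symAverage C, inSk_symAverage hC, fun σ => permAct_symAverage σ C,
    fun C' hC' => (gMax_symAverage_le C).trans (hmin C' hC')⟩

theorem stmt4 (k : ℕ) (hk : 0 < k) :
    ∃ C : Fin k → Matrix (Fin k) (Fin k) ℝ, inSk k C ∧
      (∀ σ : Equiv.Perm (Fin k), permAct σ C = C) ∧
      ∀ C' : Fin k → Matrix (Fin k) (Fin k) ℝ, inSk k C' → gMax k C ≤ gMax k C' :=
  stmt4_general k
end

section
/- Let C*_k ∈ 𝔖_k be the strong homogeneous flow given by c^{*(ℓ)}_{i,j} = 2/k − 1/k² if i = j = ℓ; 1/k − 1/k² if exactly one of i, j equals ℓ; and −1/k² otherwise. Then for every k-sample s ∈ S_k, g_s(C*_k) = (3k·α(s) − 2β(s)·α(s))/k², where α(s) = |s| and β(s) is the number of distinct indices appearing as a coordinate of some element of s. -/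
/-!
Since `C*_k ℓ i j = ([i = ℓ] + [j = ℓ] - 1/k) / k`, the ℓ-th partial sum is
`g_s^{(ℓ)} = (m_ℓ - α/k) / k`, where `m_ℓ` is the multiplicity of `ℓ` among the coordinates of `s`.
As `α ≤ k`, this is nonnegative when `m_ℓ ≥ 1`, while each of the `k - β` indices with `m_ℓ = 0`
contributes `α/k²`. Summing with `∑ m_ℓ = 2α` gives
`(2α - α)/k + 2α(k - β)/k² = (3kα - 2βα)/k²`.
-/

open Finset Filter

lemma IsSample.card_le {k : ℕ} {s : Finset (Fin k × Fin k)} (hs : IsSample s) : #s ≤ k := by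
  have hinj : Set.InjOn Prod.snd (s : Set (Fin k × Fin k)) := fun p hp q hq h =>
    by_contra fun hpq => hs.2 p hp q hq hpq h
  simpa using card_le_card_of_injOn Prod.snd (fun _ _ => mem_univ _) hinj

lemma Cstar_apply (k : ℕ) (ℓ i j : Fin k) :
    Cstar k ℓ i j = ((if i = ℓ then 1 else 0) + (if j = ℓ then 1 else 0) - 1 / (k : ℝ)) / k := by
  unfold Cstar
  by_cases hi : i = ℓ <;> by_cases hj : j = ℓ <;> simp [hi, hj] <;> ring

lemma gPart_Cstar {k : ℕ} (s : Finset (Fin k × Fin k)) (ℓ : Fin k) :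
    gPart s (Cstar k) ℓ = ((mult s ℓ : ℝ) - #s / k) / k := by
  simp only [gPart, Cstar_apply, ← sum_div, sum_sub_distrib, sum_add_distrib, sum_boole,
    sum_const, nsmul_eq_mul, mult, Nat.cast_add]
  ring

lemma sum_mult {k : ℕ} (s : Finset (Fin k × Fin k)) : ∑ ℓ, mult s ℓ = 2 * #s := by
  simp only [mult, sum_add_distrib]
  rw [← card_eq_sum_card_fiberwise (fun _ _ => mem_univ _),
    ← card_eq_sum_card_fiberwise (fun _ _ => mem_univ _)]
  ring

lemma mult_eq_zero_iff {k : ℕ} (s : Finset (Fin k × Fin k)) (ℓ : Fin k) :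
    mult s ℓ = 0 ↔ ℓ ∉ s.image Prod.fst ∪ s.image Prod.snd := by
  simp only [mult, Nat.add_eq_zero_iff, card_eq_zero, filter_eq_empty_iff, mem_union, mem_image,
    not_or, not_exists, not_and]

lemma card_filter_mult_eq_zero_add_beta {k : ℕ} (s : Finset (Fin k × Fin k)) :
    #{ℓ | mult s ℓ = 0} + beta s = k := by
  have hzero : ({ℓ | mult s ℓ = 0} : Finset (Fin k)) = (s.image Prod.fst ∪ s.image Prod.snd)ᶜ := by
    ext ℓ
    simp only [mem_filter, mem_univ, true_and, mem_compl, mult_eq_zero_iff]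
  rw [hzero, beta, card_compl_add_card, Fintype.card_fin]

lemma abs_natCast_sub_of_le_one (m : ℕ) {c : ℝ} (hc₀ : 0 ≤ c) (hc₁ : c ≤ 1) :
    |(m : ℝ) - c| = m - c + if m = 0 then 2 * c else 0 := by
  rcases Nat.eq_zero_or_pos m with rfl | hm
  · simp only [CharP.cast_eq_zero, zero_sub, abs_neg, abs_of_nonneg hc₀, ↓reduceIte]
    ring
  · have hm₁ : (1 : ℝ) ≤ m := by exact_mod_cast hm
    simp only [abs_of_nonneg (by linarith : (0 : ℝ) ≤ m - c), hm.ne', if_false, add_zero]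

theorem stmt5 (k : ℕ) (hk : 0 < k) (s : Finset (Fin k × Fin k)) (hs : IsSample s) :
    gSample s (Cstar k) =
      (3 * (k:ℝ) * (s.card : ℝ) - 2 * (beta s : ℝ) * (s.card : ℝ)) / (k:ℝ)^2 := by
  have hk₀ : (0 : ℝ) < k := by exact_mod_cast hk
  have hc₀ : 0 ≤ (#s : ℝ) / k := by positivity
  have hc₁ : (#s : ℝ) / k ≤ 1 := (div_le_one hk₀).mpr (by exact_mod_cast hs.card_le)
  have hmult : ∑ ℓ, (mult s ℓ : ℝ) = 2 * #s := by exact_mod_cast sum_mult s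
  have hzero : (#{ℓ | mult s ℓ = 0} : ℝ) = k - beta s := by
    rw [eq_sub_iff_add_eq]
    exact_mod_cast card_filter_mult_eq_zero_add_beta s
  calc gSample s (Cstar k)
      = ∑ ℓ, ((mult s ℓ : ℝ) - #s / k + if mult s ℓ = 0 then 2 * ((#s : ℝ) / k) else 0) / k := by
        simp only [gSample, gPart_Cstar, abs_div, Nat.abs_cast,
          abs_natCast_sub_of_le_one _ hc₀ hc₁]
    _ = (3 * (k:ℝ) * (s.card : ℝ) - 2 * (beta s : ℝ) * (s.card : ℝ)) / (k:ℝ)^2 := by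
        rw [← sum_div, sum_add_distrib, sum_sub_distrib, hmult, ← sum_filter, sum_const,
          sum_const, nsmul_eq_mul, nsmul_eq_mul, hzero, card_univ, Fintype.card_fin]
        field_simp
        ring
end

section
/- Define h : ℝ² → ℝ² by the coefficient map of the averaged perturbation over S_k(d,d,d): if every s in S_k(d,d,d) lies in S_k^†(C), then Σ_{s ∈ S_k(d,d,d)} (g_s(C+Δ) − g_s(C)) = A·Σ_{i=1}^k δ^{(i)}_{i,i} + B·Σ_{i≠j} δ^{(i)}_{j,j}, where A = C(k−1, d−1) and B = C(k−2, d−2) − C(k−2, d−1), for any Δ = C' − C with C' in a suitable neighborhood of C in 𝔖_k, k ≥ 3, d ≥ 2. -/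
open Finset Filter

/-- S_k(d,d,d): samples consisting of d diagonal elements. -/
def Sddd (k d : ℕ) : Finset (Finset (Fin k × Fin k)) :=
  (Finset.univ : Finset (Finset (Fin k × Fin k))).filter
    (fun s => s.card = d ∧ ∀ p ∈ s, p.1 = p.2)

/-
On a diagonal sample `s = {(i, i) : i ∈ T}` every `g_s^{(ℓ)}` keeps its sign between `C` and
`C + Δ`, so `g_s(C + Δ) - g_s(C) = ∑_ℓ ε_T(ℓ) ∑_{i ∈ T} δ^{(ℓ)}_{i,i}` with `ε_T(ℓ) = ±1` according
as `ℓ ∈ T` or not. Summing over the `d`-subsets `T` and exchanging the sums, the coefficient of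
`δ^{(ℓ)}_{i,i}` is the number of `T ∋ i` containing `ℓ` minus the number of those avoiding `ℓ`:
`C(k-1, d-1)` when `ℓ = i`, and `C(k-2, d-2) - C(k-2, d-1)` otherwise.
-/

theorem card_powersetCard_filter_subset_disjoint {α : Type*} [DecidableEq α]
    {A I J : Finset α} (hIA : I ⊆ A) (hJA : J ⊆ A) (hIJ : Disjoint I J) {d : ℕ} (hId : #I ≤ d) :
    #{T ∈ A.powersetCard d | I ⊆ T ∧ Disjoint J T} = (#A - #I - #J).choose (d - #I) := by
  obtain ⟨n, rfl⟩ := Nat.exists_eq_add_of_le hId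
  have hcard : #(A \ (I ∪ J)) = #A - #I - #J := by
    rw [card_sdiff_of_subset (union_subset hIA hJA), card_union_of_disjoint hIJ, Nat.sub_sub]
  have hdisj {U : Finset α} (hU : U ⊆ A \ (I ∪ J)) : Disjoint U I :=
    disjoint_of_subset_left hU (sdiff_disjoint.mono_right subset_union_left)
  rw [Nat.add_sub_cancel_left, ← hcard, ← card_powersetCard]
  apply card_nbij' (· \ I) (· ∪ I)
  · intro T hT
    simp only [coe_filter, mem_powersetCard, Set.mem_ofPred_eq, mem_coe] at hT ⊢
    obtain ⟨⟨hTA, hTc⟩, hIT, hJT⟩ := hT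
    refine ⟨?_, by rw [card_sdiff_of_subset hIT]; omega⟩
    rw [subset_sdiff, disjoint_union_right]
    exact ⟨sdiff_subset.trans hTA, sdiff_disjoint, hJT.symm.mono_left sdiff_subset⟩
  · intro U hU
    simp only [coe_filter, mem_powersetCard, Set.mem_ofPred_eq, mem_coe] at hU ⊢
    obtain ⟨hUA, hUc⟩ := hU
    refine ⟨⟨union_subset (hUA.trans sdiff_subset) hIA, ?_⟩, subset_union_right, ?_⟩
    · rw [card_union_of_disjoint (hdisj hUA)]; omega
    · rw [disjoint_union_right]
      exact ⟨(disjoint_of_subset_left hUA (sdiff_disjoint.mono_right subset_union_right)).symm,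
        hIJ.symm⟩
  · intro T hT
    simp only [coe_filter, mem_powersetCard, Set.mem_ofPred_eq] at hT
    exact sdiff_union_of_subset hT.2.1
  · intro U hU
    simp only [mem_powersetCard, mem_coe] at hU
    exact union_sdiff_cancel_right (hdisj hU.1)

theorem sum_powersetCard_filter_mem_sign {α : Type*} [Fintype α] [DecidableEq α] {d : ℕ}
    (hd : 2 ≤ d) (i ℓ : α) :
    ∑ T ∈ univ.powersetCard d with i ∈ T, (if ℓ ∈ T then (1 : ℝ) else -1) =
      if ℓ = i then ((Fintype.card α - 1).choose (d - 1) : ℝ)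
      else ((Fintype.card α - 2).choose (d - 2) : ℝ) - (Fintype.card α - 2).choose (d - 1) := by
  rw [sum_ite, sum_const, sum_const, filter_filter, filter_filter, nsmul_one, smul_neg,
    nsmul_one, ← sub_eq_add_neg]
  split_ifs with hℓi
  · subst hℓi
    have hin : #{T ∈ univ.powersetCard d | ℓ ∈ T} = (Fintype.card α - 1).choose (d - 1) := by
      have := card_powersetCard_filter_subset_disjoint (A := univ) (subset_univ {ℓ})
        (empty_subset _) (disjoint_empty_right _) (d := d) (by simp; omega)
      simpa using this
    simp [hin]
  · have hboth : #{T ∈ univ.powersetCard d | i ∈ T ∧ ℓ ∈ T} =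
        (Fintype.card α - 2).choose (d - 2) := by
      have := card_powersetCard_filter_subset_disjoint (A := univ) (subset_univ {i, ℓ})
        (empty_subset _) (disjoint_empty_right _) (d := d) (by rw [card_pair (Ne.symm hℓi)]; omega)
      simpa [insert_subset_iff, card_pair (Ne.symm hℓi)] using this
    have hone : #{T ∈ univ.powersetCard d | i ∈ T ∧ ℓ ∉ T} =
        (Fintype.card α - 2).choose (d - 1) := by
      have := card_powersetCard_filter_subset_disjoint (A := univ) (subset_univ {i})
        (subset_univ {ℓ}) (disjoint_singleton.2 (Ne.symm hℓi)) (d := d) (by simp; omega)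
      simpa [Nat.sub_sub] using this
    rw [hboth, hone]

theorem sum_sum_ite_eq_mul_diag_add_mul_offDiag {α R : Type*} [Fintype α] [DecidableEq α]
    [CommRing R] (a b : R) (x : α → α → R) :
    ∑ ℓ, ∑ i, (if ℓ = i then a else b) * x ℓ i =
      a * ∑ i, x i i + b * ∑ i, ∑ j, if j = i then 0 else x i j := by
  have hsplit (ℓ i : α) : (if ℓ = i then a else b) * x ℓ i =
      (if ℓ = i then a * x ℓ i else 0) + b * (if i = ℓ then 0 else x ℓ i) := by
    by_cases h : ℓ = i
    · simp [h]
    · simp [h, Ne.symm h]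
  simp only [hsplit, sum_add_distrib, sum_ite_eq, mem_univ, if_true, ← mul_sum]

theorem Sddd_eq_map_diag (k d : ℕ) :
    Sddd k d = (univ.powersetCard d).map ⟨Finset.diag, map_injective _⟩ := by
  ext s
  simp only [Sddd, mem_filter, mem_univ, true_and, Finset.mem_map, mem_powersetCard, subset_univ]
  constructor
  · rintro ⟨hcard, hdiag⟩
    have hs : (s.image Prod.fst).diag = s := by
      ext ⟨a, b⟩
      simp only [mem_diag, mem_image]
      grind
    exact ⟨s.image Prod.fst, by rw [← diag_card, hs, hcard], hs⟩
  · rintro ⟨T, hT, rfl⟩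
    exact ⟨(diag_card T).trans hT, fun p hp => (mem_diag.1 hp).2⟩

section Samples

variable {k : ℕ}

theorem gPart_add (s : Finset (Fin k × Fin k)) (C Δ : Fin k → Matrix (Fin k) (Fin k) ℝ)
    (ℓ : Fin k) : gPart s (C + Δ) ℓ = gPart s C ℓ + gPart s Δ ℓ :=
  sum_add_distrib

theorem gPart_diag (T : Finset (Fin k)) (C : Fin k → Matrix (Fin k) (Fin k) ℝ) (ℓ : Fin k) :
    gPart T.diag C ℓ = ∑ i ∈ T, C ℓ i i :=
  sum_map _ _ _

theorem mult_diag_eq_zero_iff (T : Finset (Fin k)) (ℓ : Fin k) : mult T.diag ℓ = 0 ↔ ℓ ∉ T := by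
  simp [mult, filter_eq_empty_iff]

theorem gSample_sub_gSample_eq_sum_sign {s : Finset (Fin k × Fin k)}
    {C C' : Fin k → Matrix (Fin k) (Fin k) ℝ} (p : Fin k → Prop) [DecidablePred p]
    (hpos : ∀ ℓ, p ℓ → 0 < gPart s C ℓ ∧ 0 < gPart s C' ℓ)
    (hneg : ∀ ℓ, ¬p ℓ → gPart s C ℓ < 0 ∧ gPart s C' ℓ < 0) :
    gSample s C' - gSample s C =
      ∑ ℓ, (if p ℓ then 1 else -1) * (gPart s C' ℓ - gPart s C ℓ) := by
  rw [gSample, gSample, ← sum_sub_distrib]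
  refine sum_congr rfl fun ℓ _ => ?_
  by_cases h : p ℓ
  · obtain ⟨h₁, h₂⟩ := hpos ℓ h
    rw [if_pos h, abs_of_pos h₁, abs_of_pos h₂, one_mul]
  · obtain ⟨h₁, h₂⟩ := hneg ℓ h
    rw [if_neg h, abs_of_neg h₁, abs_of_neg h₂]
    ring

end Samples

theorem stmt12_general (k d : ℕ) (hd : 2 ≤ d)
    (C Δ : Fin k → Matrix (Fin k) (Fin k) ℝ)
    (hsign : ∀ s ∈ Sddd k d, ∀ ℓ : Fin k,
      (mult s ℓ ≠ 0 → 0 < gPart s C ℓ ∧ 0 < gPart s (C + Δ) ℓ) ∧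
      (mult s ℓ = 0 → gPart s C ℓ < 0 ∧ gPart s (C + Δ) ℓ < 0)) :
    ∑ s ∈ Sddd k d, (gSample s (C + Δ) - gSample s C) =
      ((k-1).choose (d-1) : ℝ) * (∑ i : Fin k, Δ i i i) +
      (((k-2).choose (d-2) : ℝ) - ((k-2).choose (d-1) : ℝ)) *
        (∑ i : Fin k, ∑ j : Fin k, if j = i then 0 else Δ i j j) := by
  have hdiag (T) (hT : T ∈ univ.powersetCard d) :
      gSample T.diag (C + Δ) - gSample T.diag C =
        ∑ ℓ, (if ℓ ∈ T then 1 else -1) * ∑ i ∈ T, Δ ℓ i i := by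
    have hs := hsign T.diag (by rw [Sddd_eq_map_diag]; exact mem_map_of_mem _ hT)
    rw [gSample_sub_gSample_eq_sum_sign (· ∈ T)
      (fun ℓ h => (hs ℓ).1 (by rwa [Ne, mult_diag_eq_zero_iff, not_not]))
      (fun ℓ h => (hs ℓ).2 ((mult_diag_eq_zero_iff T ℓ).2 h))]
    simp only [gPart_add, gPart_diag, add_sub_cancel_left]
  rw [Sddd_eq_map_diag, sum_map]
  calc _ = ∑ T ∈ univ.powersetCard d, ∑ ℓ, (if ℓ ∈ T then 1 else -1) * ∑ i ∈ T, Δ ℓ i i :=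
        sum_congr rfl hdiag
    _ = ∑ ℓ, ∑ i, (∑ T ∈ univ.powersetCard d with i ∈ T,
          if ℓ ∈ T then (1 : ℝ) else -1) * Δ ℓ i i := by
        rw [sum_comm]
        refine sum_congr rfl fun ℓ _ => ?_
        simp_rw [mul_sum, sum_mul]
        exact sum_comm' fun T i => by simp
    _ = _ := by
        simp only [sum_powersetCard_filter_mem_sign hd, Fintype.card_fin]
        exact sum_sum_ite_eq_mul_diag_add_mul_offDiag _ _ _

theorem stmt12 (k d : ℕ) (hk : 3 ≤ k) (hd : 2 ≤ d) (hdk : d ≤ k)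
    (C Δ : Fin k → Matrix (Fin k) (Fin k) ℝ)
    (hC : inSk k C) (hCΔ : inSk k (C + Δ))
    (hsign : ∀ s ∈ Sddd k d, ∀ ℓ : Fin k,
      (mult s ℓ ≠ 0 → 0 < gPart s C ℓ ∧ 0 < gPart s (C + Δ) ℓ) ∧
      (mult s ℓ = 0 → gPart s C ℓ < 0 ∧ gPart s (C + Δ) ℓ < 0)) :
    ∑ s ∈ Sddd k d, (gSample s (C + Δ) - gSample s C) =
      ((k-1).choose (d-1) : ℝ) * (∑ i : Fin k, Δ i i i) +
      (((k-2).choose (d-2) : ℝ) - ((k-2).choose (d-1) : ℝ)) *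
        (∑ i : Fin k, ∑ j : Fin k, if j = i then 0 else Δ i j j) :=
  stmt12_general k d hd C Δ hsign
end

section
/- For k = 3, the system of equations h_s(Δ) = 0 for all maximizing samples s ∈ S_3(2,2) ∪ S_3(3,3,0), together with the constraints that all row and column sums of each of the three 3×3 matrices δ^{(1)}, δ^{(2)}, δ^{(3)} vanish, has Δ = 0 as its only solution. Here each h_s(Δ) is the signed linear form Σ_{ℓ ∈ Ind_s} g_s^{(ℓ)}(Δ) − Σ_{ℓ ∉ Ind_s} g_s^{(ℓ)}(Δ) where g_s^{(ℓ)}(Δ) = Σ_{(i,j)∈s} δ^{(ℓ)}_{i,j}. -/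
/-!
Write `D = Δ 0 + Δ 1 + Δ 2`. A sample of `S₃(3,3,0)` is the graph `{(f j, j)}` of a
fixed-point-free map `f`; every index occurs in it, so `h_s(Δ)` is the sum of `D` over `s`.
Changing `f` in a single column shows that each column of `D` is constant off the diagonal, and
the zero line sums then force `D = 0`.

A sample of `S₃(2,2)` lies in `{u,v}²`, and only the third index `w` enters with a minus sign, so
`h_s(Δ) = g_s(D) - 2 g_s(Δ w) = -2 g_s(Δ w)`. With the zero line sums this pins `Δ w` down:
`Δ w i j` is `Δ w j j` off row `w` and `-2 Δ w j j` on it. Now `D i j = 0` reads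
`∑ w, Δ w j j = 3 Δ i j j` for every `i`, and `Δ j j j = 0`, so every diagonal entry vanishes,
and with it all of `Δ`.
-/

open Finset Filter

namespace Matrix

variable {n R : Type*} [Fintype n] [DecidableEq n] [Field R]

theorem apply_eq_of_forall_sum_fixedPointFree {M : Matrix n n R}
    (h : ∀ f : n → n, (∀ j, f j ≠ j) → ∑ j, M (f j) j = 0)
    {f₀ : n → n} (hf₀ : ∀ j, f₀ j ≠ j) {a j : n} (ha : a ≠ j) :
    M a j = M (f₀ j) j := by
  have key : ∀ b ≠ j, M b j + ∑ i ∈ univ.erase j, M (f₀ i) i = 0 := by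
    intro b hb
    have hfix : ∀ i, Function.update f₀ j b i ≠ i := by
      intro i
      rcases eq_or_ne i j with rfl | hi
      · simpa using hb
      · simpa [hi] using hf₀ i
    have := h _ hfix
    rwa [← add_sum_erase _ _ (mem_univ j), Function.update_self,
      sum_congr rfl fun i hi => by rw [Function.update_of_ne (ne_of_mem_erase hi)]] at this
  linear_combination key a ha - key (f₀ j) (hf₀ j)

theorem eq_zero_of_forall_sum_fixedPointFree [CharZero R] [Nontrivial n] {M : Matrix n n R}
    (hrow : ∀ i, ∑ j, M i j = 0) (hcol : ∀ j, ∑ i, M i j = 0)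
    (h : ∀ f : n → n, (∀ j, f j ≠ j) → ∑ j, M (f j) j = 0) : M = 0 := by
  choose f₀ hf₀ using fun j : n => exists_ne j
  set c : n → R := fun j => M (f₀ j) j
  have hoff : ∀ a j, a ≠ j → M a j - c j = 0 := fun a j ha =>
    sub_eq_zero.2 (apply_eq_of_forall_sum_fixedPointFree h hf₀ ha)
  have hdiag_row : ∀ i, M i i - c i = 0 := by
    intro i
    rw [← sum_eq_single i (fun j _ hj => hoff i j hj.symm) (absurd (mem_univ i)),
      sum_sub_distrib, hrow, h f₀ hf₀, sub_zero]
  have hdiag_col : ∀ j, M j j - c j = -(Fintype.card n * c j) := by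
    intro j
    rw [← sum_eq_single j (fun a _ ha => hoff a j ha) (absurd (mem_univ j)),
      sum_sub_distrib, hcol, sum_const, card_univ, nsmul_eq_mul, zero_sub]
  have hc : ∀ j, c j = 0 := fun j => by
    simpa [Fintype.card_ne_zero] using (hdiag_col j).symm.trans (hdiag_row j)
  ext a j
  rcases eq_or_ne a j with rfl | ha
  · simpa [hc] using hdiag_row a
  · simpa [hc] using hoff a j ha

end Matrix

section Samples

variable {k : ℕ}

theorem mult_ne_zero_iff {s : Finset (Fin k × Fin k)} {ℓ : Fin k} :
    mult s ℓ ≠ 0 ↔ ∃ p ∈ s, p.1 = ℓ ∨ p.2 = ℓ := by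
  rw [mult, Ne, Nat.add_eq_zero_iff, not_and_or, ← Ne, ← Ne, card_ne_zero, card_ne_zero,
    filter_nonempty_iff, filter_nonempty_iff]
  exact ⟨fun h => h.elim (fun ⟨p, hp, h⟩ => ⟨p, hp, .inl h⟩) fun ⟨p, hp, h⟩ => ⟨p, hp, .inr h⟩,
    fun ⟨p, hp, h⟩ => h.imp (⟨p, hp, ·⟩) (⟨p, hp, ·⟩)⟩

def graphSample (f : Fin k → Fin k) : Finset (Fin k × Fin k) :=
  univ.map ⟨fun j => (f j, j), fun _ _ h => congrArg Prod.snd h⟩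

@[simp]
theorem mem_graphSample {f : Fin k → Fin k} {p : Fin k × Fin k} :
    p ∈ graphSample f ↔ p.1 = f p.2 := by
  constructor
  · rintro hp
    obtain ⟨j, -, rfl⟩ := Finset.mem_map.1 hp
    rfl
  · intro hp
    exact Finset.mem_map.2 ⟨p.2, mem_univ _, Prod.ext hp.symm rfl⟩

theorem isSample_graphSample [NeZero k] (f : Fin k → Fin k) : IsSample (graphSample f) :=
  ⟨⟨(f 0, 0), by simp⟩, fun p hp q hq hpq h => hpq <| by
    rw [mem_graphSample] at hp hq
    exact Prod.ext (by rw [hp, hq, h]) h⟩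

theorem card_graphSample (f : Fin k → Fin k) : (graphSample f).card = k := by
  simp [graphSample]

theorem beta_graphSample (f : Fin k → Fin k) : beta (graphSample f) = k := by
  have : (graphSample f).image Prod.fst ∪ (graphSample f).image Prod.snd = univ :=
    eq_univ_of_forall fun j => mem_union_right _ (mem_image.2 ⟨(f j, j), by simp, rfl⟩)
  rw [beta, this, card_univ, Fintype.card_fin]

theorem gamma_graphSample {f : Fin k → Fin k} (hf : ∀ j, f j ≠ j) :
    gamma (graphSample f) = 0 := by
  simp only [gamma, card_eq_zero, filter_eq_empty_iff, mem_graphSample]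
  intro p hp h
  exact hf p.2 (hp ▸ h)

theorem mult_graphSample_ne_zero (f : Fin k → Fin k) (ℓ : Fin k) :
    mult (graphSample f) ℓ ≠ 0 :=
  mult_ne_zero_iff.2 ⟨(f ℓ, ℓ), by simp, Or.inr rfl⟩

theorem sum_graphSample {M : Type*} [AddCommMonoid M] (f : Fin k → Fin k)
    (g : Fin k × Fin k → M) : ∑ p ∈ graphSample f, g p = ∑ j, g (f j, j) :=
  sum_map _ _ _

variable {a b u v : Fin k}

theorem isSample_pair (huv : u ≠ v) : IsSample {(a, u), (b, v)} := by
  refine ⟨insert_nonempty _ _, ?_⟩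
  simp only [mem_insert, mem_singleton]
  rintro p (rfl | rfl) q (rfl | rfl) hpq <;>
    first | exact absurd rfl hpq | simpa using huv | simpa using huv.symm

theorem card_pair_sample (huv : u ≠ v) :
    ({(a, u), (b, v)} : Finset (Fin k × Fin k)).card = 2 :=
  card_pair fun h => huv (congrArg Prod.snd h)

theorem beta_pair (huv : u ≠ v) (ha : a = u ∨ a = v) (hb : b = u ∨ b = v) :
    beta {(a, u), (b, v)} = 2 := by
  have : ({a, b} : Finset (Fin k)) ⊆ {u, v} := by
    intro x
    simp only [mem_insert, mem_singleton]
    rintro (rfl | rfl) <;> assumption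
  simp [beta, image_insert, union_eq_right.2 this, card_pair huv]

theorem mult_pair_ne_zero_iff (ha : a = u ∨ a = v) (hb : b = u ∨ b = v) {ℓ : Fin k} :
    mult {(a, u), (b, v)} ℓ ≠ 0 ↔ ℓ = u ∨ ℓ = v := by
  rw [mult_ne_zero_iff]
  simp only [mem_insert, mem_singleton, exists_eq_or_imp, exists_eq_left]
  rcases ha with rfl | rfl <;> rcases hb with rfl | rfl <;> tauto

theorem gPart_pair (huv : u ≠ v) (C : Fin k → Matrix (Fin k) (Fin k) ℝ) (ℓ : Fin k) :
    gPart {(a, u), (b, v)} C ℓ = C ℓ a u + C ℓ b v :=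
  sum_pair fun h => huv (congrArg Prod.snd h)

end Samples

section SignedForm

variable {k : ℕ}

def hSample (s : Finset (Fin k × Fin k)) (C : Fin k → Matrix (Fin k) (Fin k) ℝ) : ℝ :=
  ∑ ℓ : Fin k, (if mult s ℓ ≠ 0 then (1 : ℝ) else -1) * gPart s C ℓ

theorem sum_gPart (s : Finset (Fin k × Fin k)) (C : Fin k → Matrix (Fin k) (Fin k) ℝ) :
    ∑ ℓ, gPart s C ℓ = ∑ p ∈ s, (∑ ℓ, C ℓ) p.1 p.2 := by
  simp only [gPart, Matrix.sum_apply]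
  exact sum_comm

theorem hSample_eq_of_forall_mult_ne_zero {s : Finset (Fin k × Fin k)}
    (hs : ∀ ℓ, mult s ℓ ≠ 0) (C : Fin k → Matrix (Fin k) (Fin k) ℝ) :
    hSample s C = ∑ p ∈ s, (∑ ℓ, C ℓ) p.1 p.2 := by
  simp [hSample, hs, sum_gPart]

theorem hSample_eq_of_mult_ne_zero_iff {s : Finset (Fin k × Fin k)} {w : Fin k}
    (hw : ∀ ℓ, mult s ℓ ≠ 0 ↔ ℓ ≠ w) (C : Fin k → Matrix (Fin k) (Fin k) ℝ) :
    hSample s C = ∑ p ∈ s, (∑ ℓ, C ℓ) p.1 p.2 - 2 * gPart s C w := by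
  have hsign : ∀ ℓ, (if mult s ℓ ≠ 0 then (1 : ℝ) else -1) * gPart s C ℓ =
      gPart s C ℓ - if w = ℓ then 2 * gPart s C ℓ else 0 := by
    intro ℓ
    rcases eq_or_ne w ℓ with rfl | h
    · simp only [hw, ne_eq, not_true_eq_false, if_false, if_true]
      ring
    · simp [hw, h.symm, h]
  rw [hSample, sum_congr rfl fun ℓ _ => hsign ℓ, sum_sub_distrib, sum_ite_eq, if_pos (mem_univ _),
    sum_gPart]

end SignedForm

theorem Fin.sum_univ_three_of_ne {M : Type*} [AddCommMonoid M] {u v w : Fin 3}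
    (huv : u ≠ v) (huw : u ≠ w) (hvw : v ≠ w) (f : Fin 3 → M) :
    ∑ i, f i = f u + f v + f w := by
  fin_cases u <;> fin_cases v <;> fin_cases w <;> simp_all [Fin.sum_univ_three] <;> abel

theorem Fin.eq_or_eq_iff_ne_of_three {u v w : Fin 3} (huv : u ≠ v) (huw : u ≠ w) (hvw : v ≠ w)
    (i : Fin 3) : i = u ∨ i = v ↔ i ≠ w := by
  revert u v w i; decide

theorem Fin.exists_pair_ne_of_three (w : Fin 3) : ∃ u v : Fin 3, u ≠ v ∧ u ≠ w ∧ v ≠ w := by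
  revert w; decide

namespace Matrix

variable {R : Type*} [Field R]

theorem apply_eq_ite_mul_diag_of_pair_sums_eq_zero {M : Matrix (Fin 3) (Fin 3) R} {w : Fin 3}
    (hrow : ∀ i, ∑ j, M i j = 0) (hcol : ∀ j, ∑ i, M i j = 0)
    (hpair : ∀ u v a b, u ≠ v → u ≠ w → v ≠ w → (a = u ∨ a = v) → (b = u ∨ b = v) →
      M a u + M b v = 0)
    (i j : Fin 3) : M i j = (if i = w then -2 else 1) * M j j := by
  obtain ⟨u, v, huv, huw, hvw⟩ := Fin.exists_pair_ne_of_three w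
  have hcover : ∀ x, x = u ∨ x = v ∨ x = w := fun x => by
    by_cases hx : x = w
    · exact .inr (.inr hx)
    · exact ((Fin.eq_or_eq_iff_ne_of_three huv huw hvw x).2 hx).elim .inl (.inr ∘ .inl)
  have row x := (Fin.sum_univ_three_of_ne huv huw hvw (M x)).symm.trans (hrow x)
  have col y := (Fin.sum_univ_three_of_ne huv huw hvw (M · y)).symm.trans (hcol y)
  have e_uv := hpair u v u v huv huw hvw (.inl rfl) (.inr rfl)
  have e_vv := hpair u v v v huv huw hvw (.inr rfl) (.inr rfl)
  have e_uu := hpair u v u u huv huw hvw (.inl rfl) (.inl rfl)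
  have hMuw : M u w = 0 := by linear_combination row u - e_uu
  have hMvw : M v w = 0 := by linear_combination row v - e_vv
  have hMww : M w w = 0 := by linear_combination col w - hMuw - hMvw
  have hMvu : M v u = M u u := by linear_combination e_vv - e_uv
  have hMuv : M u v = M v v := by linear_combination e_uu - e_uv
  have hMwu : M w u = -2 * M u u := by linear_combination col u - hMvu
  have hMwv : M w v = -2 * M v v := by linear_combination col v - hMuv
  rcases hcover i with rfl | rfl | rfl <;> rcases hcover j with rfl | rfl | rfl <;>
    simp [huw, hvw, hMuw, hMvw, hMww, hMvu, hMuv, hMwu, hMwv]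

end Matrix

theorem eq_zero_of_forall_apply_eq_ite_mul_diag {n R : Type*} [Fintype n] [DecidableEq n]
    [Field R] [CharZero R] {Δ : n → Matrix n n R}
    (h : ∀ w i j, Δ w i j = (if i = w then -2 else 1) * Δ w j j) (hsum : ∑ w, Δ w = 0) :
    Δ = 0 := by
  have hcol : ∀ i j, ∑ w, Δ w j j - 3 * Δ i j j = 0 := by
    intro i j
    have hij : ∑ w, Δ w i j = 0 := by
      simpa [Matrix.sum_apply] using congrFun (congrFun hsum i) j
    calc ∑ w, Δ w j j - 3 * Δ i j j
        = ∑ w, (Δ w j j - if i = w then 3 * Δ w j j else 0) := by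
          rw [sum_sub_distrib, sum_ite_eq, if_pos (mem_univ i)]
      _ = ∑ w, Δ w i j := sum_congr rfl fun w _ => by rw [h w i j]; split_ifs <;> ring
      _ = 0 := hij
  have hdiag : ∀ j, Δ j j j = 0 := fun j => by
    have := h j j j
    simp only [if_true] at this
    linear_combination (1 / 3 : R) * this
  have hzero : ∀ i j, Δ i j j = 0 := fun i j => by
    linear_combination (1 / 3 : R) * (hcol j j - hcol i j) + hdiag j
  ext w i j
  rw [h, hzero]
  simp

theorem stmt18 (Δ : Fin 3 → Matrix (Fin 3) (Fin 3) ℝ)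
    (hrow : ∀ ℓ i : Fin 3, ∑ j, Δ ℓ i j = 0)
    (hcol : ∀ ℓ j : Fin 3, ∑ i, Δ ℓ i j = 0)
    (hvanish : ∀ s : Finset (Fin 3 × Fin 3),
      ((IsSample s ∧ s.card = 2 ∧ beta s = 2) ∨
       (IsSample s ∧ s.card = 3 ∧ beta s = 3 ∧ gamma s = 0)) →
      ∑ ℓ : Fin 3, (if mult s ℓ ≠ 0 then (1:ℝ) else -1) * gPart s Δ ℓ = 0) :
    Δ = 0 := by
  have hsum : ∑ ℓ, Δ ℓ = 0 := by
    refine Matrix.eq_zero_of_forall_sum_fixedPointFree (fun i => ?_) (fun j => ?_) fun f hf => ?_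
    · simp only [Matrix.sum_apply]
      rw [sum_comm]
      simp [hrow]
    · simp only [Matrix.sum_apply]
      rw [sum_comm]
      simp [hcol]
    · have := hvanish (graphSample f) (.inr ⟨isSample_graphSample f, card_graphSample f,
        beta_graphSample f, gamma_graphSample hf⟩)
      rwa [← hSample, hSample_eq_of_forall_mult_ne_zero (mult_graphSample_ne_zero f),
        sum_graphSample] at this
  have hpair : ∀ w u v a b : Fin 3, u ≠ v → u ≠ w → v ≠ w → (a = u ∨ a = v) → (b = u ∨ b = v) →
      Δ w a u + Δ w b v = 0 := by
    intro w u v a b huv huw hvw ha hb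
    have := hvanish {(a, u), (b, v)} (.inl ⟨isSample_pair huv, card_pair_sample huv,
      beta_pair huv ha hb⟩)
    rw [← hSample, hSample_eq_of_mult_ne_zero_iff (w := w) (fun ℓ =>
      (mult_pair_ne_zero_iff ha hb).trans (Fin.eq_or_eq_iff_ne_of_three huv huw hvw ℓ)), hsum,
      gPart_pair huv] at this
    simpa using this
  exact eq_zero_of_forall_apply_eq_ite_mul_diag
    (fun w => Matrix.apply_eq_ite_mul_diag_of_pair_sums_eq_zero (hrow w) (hcol w) (hpair w)) hsum
end
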